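/- Assume t : ℂ → (0,∞) is continuous, satisfies |t(z) − t(ζ)| ≤ (1/4)|z − ζ| for all z, ζ ∈ ℂ, and t(z) → 0 as |z| → ∞. Then there exists a sequence of points (z_j) in ℂ such that: (i) z_j ∉ D(z_k, t(z_k)) for j ≠ k; (ii) ⋃_j D(z_j, t(z_j)) = ℂ; (iii) for each j, the set ⋃_{z ∈ D(z_j, t(z_j))} D(z, t(z)) is contained in D(z_j, 3 t(z_j)); (iv) the covering {D(z_j, 3t(z_j))} of ℂ has finite multiplicity, i.e. there is N such that every point of ℂ belongs to at most N of the discs D(z_j, 3t(z_j)). -/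

import Mathlib

/-! Choose the centres greedily: `z n` maximises `t` on the part of `ℂ` not yet covered by the
discs `D(z j, t (z j))`, `j < n`; the maximum exists because `t → 0` at infinity. Then `t ∘ z` is
antitone, which gives (i). A point `w` that is never covered would have `t w ≤ t (z j)` for all `j`,
so the centres would be infinitely many `t w`-separated points of a bounded set, which a volume
count forbids; this gives (ii). On `D(z j, 3 t (z j))` the Lipschitz bound makes `t` comparable to
`t (z j)`, which gives (iii), and the centres `z j` whose enlarged discs contain `w` are
`t w`-separated points of a disc of radius comparable to `t w`, so the same volume count bounds
their number uniformly in `w`; this gives (iv). -/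

open MeasureTheory Filter Metric
open scoped ENNReal

noncomputable section

/-- The Laplacian of a radial function `z ↦ φ (|z|)`, expressed in the radius `r`. -/
def lapR (φ : ℝ → ℝ) (r : ℝ) : ℝ := deriv (deriv φ) r + deriv φ r / r

/-- The quantity `∫_ℂ |f(z)|^p e^{-p φ(|z|)} dm(z)`, as a lower Lebesgue integral. -/
def fockLInt (φ : ℝ → ℝ) (p : ℝ) (f : ℂ → ℂ) : ℝ≥0∞ :=
  ∫⁻ z : ℂ, ENNReal.ofReal (‖f z‖ ^ p * Real.exp (-(p * φ ‖z‖)))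

/-- Membership in the weighted Fock space `F^φ_p`: `f` is entire and has finite `F^φ_p` norm. -/
def MemFock (φ : ℝ → ℝ) (p : ℝ) (f : ℂ → ℂ) : Prop :=
  Differentiable ℂ f ∧ fockLInt φ p f < ⊤

/-- The class `𝓘` of rapidly increasing radial weights `φ`, with associated function `τ`. -/
structure ClassI (φ τ : ℝ → ℝ) : Prop where
  φ_pos : ∀ r, 0 ≤ r → 0 < φ r
  φ_smooth : ContDiff ℝ 2 φ
  lap_pos : ∀ r, 0 < r → 0 < lapR φ r
  τ_pos : ∀ r, 0 ≤ r → 0 < τ r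
  τ_diff : Differentiable ℝ τ
  τ_anti : ∀ r s, 0 ≤ r → r ≤ s → τ s ≤ τ r
  τ_lim : Tendsto τ atTop (nhds 0)
  τ_deriv_lim : Tendsto (deriv τ) atTop (nhds 0)
  τ_one : ∃ c, 0 < c ∧ ∀ r, 0 ≤ r → r < 1 → c⁻¹ ≤ τ r ∧ τ r ≤ c
  τ_lap : ∃ c, 0 < c ∧ ∀ r, 1 ≤ r → c⁻¹ ≤ τ r ^ 2 * lapR φ r ∧ τ r ^ 2 * lapR φ r ≤ c
  extra : (∃ C, 0 < C ∧ ∃ R : ℝ, ∀ r s, R ≤ r → r ≤ s → τ r * r ^ C ≤ τ s * s ^ C) ∨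
      Tendsto (fun r => deriv τ r * Real.log (1 / τ r)) atTop (nhds 0)

/-- The integral operator `T_g f (z) = ∫_0^z f(ζ) g'(ζ) dζ` (integral along the segment). -/
def Tg (g f : ℂ → ℂ) (z : ℂ) : ℂ := z * ∫ t in (0:ℝ)..1, f (t • z) * deriv g (t • z)

/-- The integral mean `M_q(r,f)` (with `M_∞(r,f) = max_{|z|=r} |f(z)|`). -/
def circMean (q : ℝ≥0∞) (f : ℂ → ℂ) (r : ℝ) : ℝ :=
  if q = ⊤ then ⨆ t : ℝ, ‖f ((r : ℂ) * Complex.exp ((t : ℂ) * Complex.I))‖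
  else ((2 * Real.pi)⁻¹ * ∫ t in (-Real.pi)..Real.pi,
      ‖f ((r : ℂ) * Complex.exp ((t : ℂ) * Complex.I))‖ ^ q.toReal) ^ (1 / q.toReal)

/-- The `p`-distortion function `ψ_{p,φ}(r) = (∫_r^∞ s e^{-pφ(s)} ds) / ((1+r) e^{-pφ(r)})`. -/
def distortion (φ : ℝ → ℝ) (p r : ℝ) : ℝ :=
  (∫ s in Set.Ioi r, s * Real.exp (-(p * φ s))) / ((1 + r) * Real.exp (-(p * φ r)))

open Bornology Module Set
open scoped NNReal Topology

variable {X : Type*} [MetricSpace X] {t : X → ℝ}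
variable {E : Type*} [NormedAddCommGroup E] [NormedSpace ℝ E] [FiniteDimensional ℝ E]

theorem encard_le_of_pairwiseDisjoint_ball {ι : Type*} {S : Set ι} {z : ι → E} {c : E}
    {ρ R : ℝ} (hρ : 0 < ρ) (hdisj : S.PairwiseDisjoint fun i => ball (z i) ρ)
    (hsub : ∀ i ∈ S, ball (z i) ρ ⊆ ball c R) :
    S.encard ≤ ⌊(R / ρ) ^ finrank ℝ E⌋₊ := by
  borelize E
  set μ : Measure E := Measure.addHaar
  set N := ⌊(R / ρ) ^ finrank ℝ E⌋₊
  by_contra! hlt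
  obtain ⟨T, hTS, hT⟩ := exists_subset_encard_eq (Order.add_one_le_of_lt hlt)
  have hTfin : T.Finite := finite_of_encard_eq_coe (k := N + 1) (by simpa using hT)
  obtain ⟨i, hi⟩ : T.Nonempty := nonempty_of_encard_ne_zero (by simp [hT])
  have hR : 0 < R := dist_nonneg.trans_lt (hsub i (hTS hi) (mem_ball_self hρ))
  have hvol : ((N + 1 : ℕ) : ℝ≥0∞) * μ (ball 0 ρ) ≤ μ (ball c R) := calc
    ((N + 1 : ℕ) : ℝ≥0∞) * μ (ball 0 ρ)
        = ∑ i ∈ hTfin.toFinset, μ (ball (z i) ρ) := by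
      have hcard : hTfin.toFinset.card = N + 1 := by
        rw [hTfin.encard_eq_coe_toFinset_card] at hT; exact_mod_cast hT
      simp [Measure.addHaar_ball_of_pos μ _ hρ, hcard]
    _ = μ (⋃ i ∈ hTfin.toFinset, ball (z i) ρ) :=
      (measure_biUnion_finset (by simpa using hdisj.subset hTS) fun _ _ => measurableSet_ball).symm
    _ ≤ μ (ball c R) :=
      measure_mono <| iUnion₂_subset fun i hi => hsub i (hTS (by simpa using hi))
  rw [Measure.addHaar_ball_of_pos μ _ hρ, Measure.addHaar_ball_of_pos μ _ hR, ← mul_assoc,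
    ENNReal.mul_le_mul_iff_left (measure_ball_pos μ _ one_pos).ne' measure_ball_lt_top.ne,
    ← ENNReal.ofReal_natCast, ← ENNReal.ofReal_mul (by positivity),
    ENNReal.ofReal_le_ofReal_iff (by positivity), ← le_div_iff₀ (by positivity),
    ← div_pow] at hvol
  exact (Nat.lt_floor_add_one _).not_ge (by exact_mod_cast hvol)

theorem exists_isMaxOn_compl_of_isBounded [ProperSpace X] [NoncompactSpace X]
    (hcont : Continuous t) (hpos : ∀ x, 0 < t x) (hlim : Tendsto t (cobounded X) (𝓝 0))
    {U : Set X} (hU : IsOpen U) (hUb : IsBounded U) : ∃ x ∈ Uᶜ, IsMaxOn t Uᶜ x := by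
  rw [cobounded_eq_cocompact] at hlim
  have hUc : Uᶜ ∈ cocompact X := cobounded_eq_cocompact (α := X) ▸ isBounded_def.1 hUb
  obtain ⟨x₀, hx₀⟩ := Filter.nonempty_of_mem hUc
  refine hcont.continuousOn.exists_isMaxOn' hU.isClosed_compl hx₀ ?_
  exact ((hlim.eventually (gt_mem_nhds (hpos x₀))).mono fun _ => le_of_lt).filter_mono inf_le_left

theorem LipschitzWith.biUnion_ball_subset_ball {K : ℝ≥0} (ht : LipschitzWith K t) (x : X) :
    ⋃ w ∈ ball x (t x), ball w (t w) ⊆ ball x ((2 + K) * t x) := by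
  simp only [iUnion_subset_iff]
  intro w hw y hy
  rw [mem_ball] at hw hy ⊢
  have hdist := ht.dist_le_mul_of_le hw.le
  rw [Real.dist_eq, abs_le] at hdist
  calc dist y x ≤ dist y w + dist w x := dist_triangle _ _ _
    _ < (2 + K) * t x := by linarith

structure IsGreedySeq (t : X → ℝ) (z : ℕ → X) : Prop where
  notMem_ball : ∀ {j n}, j < n → z n ∉ ball (z j) (t (z j))
  le_of_forall_notMem_ball : ∀ n x, (∀ j < n, x ∉ ball (z j) (t (z j))) → t x ≤ t (z n)

theorem exists_isGreedySeq [ProperSpace X] [NoncompactSpace X] (hcont : Continuous t)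
    (hpos : ∀ x, 0 < t x) (hlim : Tendsto t (cobounded X) (𝓝 0)) : ∃ z, IsGreedySeq t z := by
  have step (n : ℕ) (f : Fin n → X) :
      ∃ x ∈ (⋃ j, ball (f j) (t (f j)))ᶜ, IsMaxOn t (⋃ j, ball (f j) (t (f j)))ᶜ x :=
    exists_isMaxOn_compl_of_isBounded hcont hpos hlim (isOpen_iUnion fun _ => isOpen_ball)
      (isBounded_iUnion.2 fun _ => isBounded_ball)
  choose next hnext_mem hnext_max using step
  set z : ℕ → X := Nat.strongRec fun n zpre => next n fun j => zpre j j.2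
  have hz (n : ℕ) : z n = next n fun j => z j := Nat.strongRec_eq _ n
  refine ⟨z, ⟨fun {j n} hjn hmem => ?_, fun n x hx => ?_⟩⟩
  · rw [hz n] at hmem
    exact hnext_mem n _ (mem_iUnion.2 ⟨⟨j, hjn⟩, hmem⟩)
  · rw [hz n]
    exact hnext_max n _ (by simpa using fun j : Fin n => hx j j.2)

namespace IsGreedySeq

variable {z : ℕ → X}

theorem antitone (hz : IsGreedySeq t z) : Antitone fun n => t (z n) := fun m n hmn =>
  hz.le_of_forall_notMem_ball m (z n) fun _ hj => hz.notMem_ball (hj.trans_le hmn)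

theorem pairwise_notMem_ball (hz : IsGreedySeq t z) :
    Pairwise fun j k => z j ∉ ball (z k) (t (z k)) := by
  intro j k hjk
  rcases hjk.lt_or_gt with hjk | hkj
  · have hkj := hz.notMem_ball hjk
    rw [mem_ball, not_lt, dist_comm] at hkj
    rw [mem_ball, not_lt]
    exact (hz.antitone hjk.le).trans hkj
  · exact hz.notMem_ball hkj

end IsGreedySeq

theorem IsGreedySeq.iUnion_ball_eq_univ {t : E → ℝ} {z : ℕ → E} (hz : IsGreedySeq t z)
    (hpos : ∀ x, 0 < t x) (hlim : Tendsto t (cobounded E) (𝓝 0)) :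
    ⋃ j, ball (z j) (t (z j)) = univ := by
  refine eq_univ_of_forall fun w => ?_
  by_contra hw
  simp only [mem_iUnion, not_exists] at hw
  have hle (j : ℕ) : t w ≤ t (z j) := hz.le_of_forall_notMem_ball j w fun i _ => hw i
  have hbdd : IsBounded {x | t w ≤ t x} := by
    rw [isBounded_def]
    filter_upwards [hlim.eventually (gt_mem_nhds (hpos w))] with x hx
    exact not_le.2 hx
  obtain ⟨R, hR⟩ := hbdd.subset_ball 0
  have hρ : 0 < t w / 2 := half_pos (hpos w)
  have hdisj : (univ : Set ℕ).PairwiseDisjoint fun j => ball (z j) (t w / 2) := by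
    intro j _ k _ hjk
    refine ball_disjoint_ball ?_
    have hsep := hz.pairwise_notMem_ball hjk
    simp only [mem_ball, not_lt] at hsep
    linarith [hle k]
  have hsub (j : ℕ) (_ : j ∈ univ) : ball (z j) (t w / 2) ⊆ ball 0 (R + t w / 2) := by
    refine ball_subset_ball' ?_
    linarith [mem_ball.1 (hR (hle j))]
  have hcard := encard_le_of_pairwiseDisjoint_ball hρ hdisj hsub
  simp at hcard

theorem exists_encard_setOf_mem_ball_le {ι : Type*} {t : E → ℝ} {K : ℝ≥0} {c : ℝ} {z : ι → E}
    (hpos : ∀ x, 0 < t x) (ht : LipschitzWith K t) (hc : 0 < c) (hKc : K * c < 1)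
    (hz : Pairwise fun j k => z j ∉ ball (z k) (t (z k))) :
    ∃ N : ℕ, ∀ w, {j | w ∈ ball (z j) (c * t (z j))}.encard ≤ N := by
  set a := 1 + K * c
  set b := 1 - K * c
  have ha : 0 < a := by positivity
  have hb : 0 < b := sub_pos.2 hKc
  -- `t (z j) ∈ [t w / a, t w / b]`, so the discs `D(z j, t w / (2 a))` are disjoint and lie in
  -- `D(w, t w / (2 a) + c t w / b)`, whose radius is `1 + 2 a c / b` times theirs.
  refine ⟨⌊(1 + 2 * a * c / b) ^ finrank ℝ E⌋₊, fun w => ?_⟩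
  have hcmp {j : ι} (hj : w ∈ ball (z j) (c * t (z j))) :
      t w ≤ a * t (z j) ∧ b * t (z j) ≤ t w := by
    have hdist := ht.dist_le_mul_of_le (mem_ball.1 hj).le
    rw [Real.dist_eq, abs_le] at hdist
    constructor <;> linarith
  have hρ : 0 < t w / (2 * a) := div_pos (hpos w) (by positivity)
  have hratio : (t w / (2 * a) + c * (t w / b)) / (t w / (2 * a)) = 1 + 2 * a * c / b := by
    field_simp [(hpos w).ne']
  rw [← hratio]
  refine encard_le_of_pairwiseDisjoint_ball (z := z) (c := w) hρ ?_ ?_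
  · intro j hj k hk hjk
    refine ball_disjoint_ball ?_
    have hsep := hz hjk
    simp only [mem_ball, not_lt] at hsep
    have hk' : t w / a ≤ t (z k) := (div_le_iff₀ ha).2 (by linarith [(hcmp hk).1])
    calc t w / (2 * a) + t w / (2 * a) = t w / a := by field_simp; ring
      _ ≤ dist (z j) (z k) := hk'.trans hsep
  · intro j hj
    refine ball_subset_ball' (add_le_add_right ?_ _)
    have hj' : t (z j) ≤ t w / b := (le_div_iff₀ hb).2 (by linarith [(hcmp hj).2])
    rw [dist_comm]
    exact (mem_ball.1 hj).le.trans (mul_le_mul_of_nonneg_left hj' hc.le)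

/-- Lemma 2.2 (covering lemma): if `t : ℂ → (0,∞)` is continuous, `(1/4)`-Lipschitz and
`t(z) → 0` as `|z| → ∞`, then there is a sequence `(z_j)` with: (i) `z_j ∉ D(z_k, t(z_k))`
for `j ≠ k`; (ii) the discs `D(z_j, t(z_j))` cover `ℂ`; (iii) the `t`-enlargement of
`D(z_j, t(z_j))` lies in `D(z_j, 3t(z_j))`; (iv) the covering `{D(z_j, 3t(z_j))}` has finite
multiplicity. -/
theorem stmt11 (t : ℂ → ℝ) (hcont : Continuous t) (hpos : ∀ z, 0 < t z)
    (hlip : ∀ z ζ : ℂ, |t z - t ζ| ≤ (1 / 4) * ‖z - ζ‖)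
    (hlim : Tendsto t (comap (fun z : ℂ => ‖z‖) atTop) (nhds 0)) :
    ∃ z : ℕ → ℂ,
      (∀ j k, j ≠ k → z j ∉ ball (z k) (t (z k))) ∧
      (⋃ j, ball (z j) (t (z j))) = Set.univ ∧
      (∀ j, (⋃ w ∈ ball (z j) (t (z j)), ball w (t w)) ⊆ ball (z j) (3 * t (z j))) ∧
      (∃ N : ℕ, ∀ w : ℂ, {j : ℕ | w ∈ ball (z j) (3 * t (z j))}.encard ≤ N) := by
  have ht : LipschitzWith (1 / 4) t :=
    LipschitzWith.of_dist_le_mul fun z ζ => by simpa [Real.dist_eq, dist_eq_norm] using hlip z ζ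
  rw [comap_norm_atTop] at hlim
  obtain ⟨z, hz⟩ := exists_isGreedySeq hcont hpos hlim
  refine ⟨z, hz.pairwise_notMem_ball, hz.iUnion_ball_eq_univ hpos hlim, fun j => ?_,
    exists_encard_setOf_mem_ball_le hpos ht three_pos (by norm_num) hz.pairwise_notMem_ball⟩
  exact (ht.biUnion_ball_subset_ball (z j)).trans
    (ball_subset_ball (by norm_num; linarith [hpos (z j)]))
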